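/- Let F : L_ℝ'(ℚ_p^N) → ℝ be measurable with 0 ≤ F ≤ 1, and for J ∈ L_ℝ(ℚ_p^N) set Z_F(J) = ∫_{L_ℝ'(ℚ_p^N)} F(W) e^{⟨W,J⟩} dP(W). Then for all m ≥ 1 and all θ_1, …, θ_m ∈ L_ℝ(ℚ_p^N), the iterated functional derivative D_{θ_1}⋯D_{θ_m} Z_F(J) exists (where D_θΦ(J) = lim_{ε→0} (Φ(J+εθ) − Φ(J))/ε), the integrand below is P-integrable, and D_{θ_1}⋯D_{θ_m} Z_F(J) = ∫_{L_ℝ'(ℚ_p^N)} F(W) (Π_{i=1}^m ⟨W,θ_i⟩) e^{⟨W,J⟩} dP(W). -/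

import Mathlib

open MeasureTheory Filter

noncomputable instance (p : ℕ) [Fact p.Prime] : MeasurableSpace ℚ_[p] := borel _
instance (p : ℕ) [Fact p.Prime] : BorelSpace ℚ_[p] := ⟨rfl⟩

/-- Real-valued Bruhat–Schwartz test functions: locally constant with compact support. -/
def IsTest (p N : ℕ) [Fact p.Prime] (f : (Fin N → ℚ_[p]) → ℝ) : Prop :=
  HasCompactSupport f ∧
    ∀ x : Fin N → ℚ_[p], ∃ r : ℤ, ∀ y : Fin N → ℚ_[p], ‖y - x‖ ≤ (p : ℝ) ^ r → f y = f x

/-- The pairing `κ·x = Σ_j κ_j x_j` on `ℚ_p^N`. -/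
noncomputable def dotp (p N : ℕ) [Fact p.Prime] (κ x : Fin N → ℚ_[p]) : ℚ_[p] :=
  ∑ j, κ j * x j

/-- Fourier transform of a real-valued test function. -/
noncomputable def FTr (p N : ℕ) [Fact p.Prime] (μ : Measure (Fin N → ℚ_[p]))
    (χ : ℚ_[p] → ℂ) (φ : (Fin N → ℚ_[p]) → ℝ) (κ : Fin N → ℚ_[p]) : ℂ :=
  ∫ x, χ (dotp p N κ x) * (φ x : ℂ) ∂μ

/-- The symbol `A_{w_δ}(κ)`. -/
noncomputable def Asymb (p N : ℕ) [Fact p.Prime] (μ : Measure (Fin N → ℚ_[p]))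
    (χ : ℚ_[p] → ℂ) (w : (Fin N → ℚ_[p]) → ℝ) (κ : Fin N → ℚ_[p]) : ℂ :=
  ∫ y, (1 - χ (dotp p N y κ)) / ((w y : ℝ) : ℂ) ∂μ

/-- The covariance form `B(φ,θ)` (real-valued on real test functions). -/
noncomputable def Bform (p N : ℕ) [Fact p.Prime] (μ : Measure (Fin N → ℚ_[p]))
    (χ : ℚ_[p] → ℂ) (w : (Fin N → ℚ_[p]) → ℝ) (γ α₂ : ℝ)
    (φ θ : (Fin N → ℚ_[p]) → ℝ) : ℝ :=
  (∫ κ, FTr p N μ χ φ κ * (starRingEnd ℂ) (FTr p N μ χ θ κ) /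
    ((γ : ℂ) / 2 * Asymb p N μ χ w κ + (α₂ : ℂ) / 2) ∂μ).re

section TestAux
variable {p N : ℕ} [Fact p.Prime]

lemma IsTest.continuous {f : (Fin N → ℚ_[p]) → ℝ} (hf : IsTest p N f) : Continuous f := by
  apply IsLocallyConstant.continuous
  rw [IsLocallyConstant.iff_exists_open]
  intro x
  obtain ⟨r, hr⟩ := hf.2 x
  refine ⟨Metric.ball x ((p : ℝ) ^ r), Metric.isOpen_ball, ?_, fun y hy => ?_⟩
  · exact Metric.mem_ball_self (zpow_pos (by exact_mod_cast (Fact.out : p.Prime).pos) r)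
  · exact hr y (le_of_lt (by rw [← dist_eq_norm]; exact hy))

lemma IsTest.add {f g : (Fin N → ℚ_[p]) → ℝ} (hf : IsTest p N f) (hg : IsTest p N g) :
    IsTest p N (fun x => f x + g x) := by
  refine ⟨HasCompactSupport.add hf.1 hg.1, fun x => ?_⟩
  obtain ⟨r, hr⟩ := hf.2 x
  obtain ⟨s, hs⟩ := hg.2 x
  have hp1 : (1 : ℝ) ≤ (p : ℝ) := by
    exact_mod_cast (Fact.out : p.Prime).one_lt.le
  refine ⟨min r s, fun y hy => ?_⟩
  have h1 : (p : ℝ) ^ (min r s) ≤ (p : ℝ) ^ r := zpow_le_zpow_right₀ hp1 (min_le_left r s)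
  have h2 : (p : ℝ) ^ (min r s) ≤ (p : ℝ) ^ s := zpow_le_zpow_right₀ hp1 (min_le_right r s)
  simp only []
  rw [hr y (hy.trans h1), hs y (hy.trans h2)]

lemma IsTest.smul {f : (Fin N → ℚ_[p]) → ℝ} (hf : IsTest p N f) (c : ℝ) :
    IsTest p N (fun x => c * f x) := by
  refine ⟨?_, fun x => ?_⟩
  · have : (fun x => c * f x) = c • f := rfl
    rw [this]; exact hf.1.smul_left
  · obtain ⟨r, hr⟩ := hf.2 x
    exact ⟨r, fun y hy => by simp only []; rw [hr y hy]⟩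

lemma IsTest.integrable {f : (Fin N → ℚ_[p]) → ℝ} (hf : IsTest p N f)
    (μ : Measure (Fin N → ℚ_[p])) [μ.IsAddHaarMeasure] : Integrable f μ :=
  hf.continuous.integrable_of_hasCompactSupport hf.1

lemma FTr_smul (p N : ℕ) [Fact p.Prime] (μ : Measure (Fin N → ℚ_[p]))
    (χ : ℚ_[p] → ℂ) (f : (Fin N → ℚ_[p]) → ℝ) (t : ℝ) (κ : Fin N → ℚ_[p]) :
    FTr p N μ χ (fun x => t * f x) κ = (t:ℂ) * FTr p N μ χ f κ := by
  unfold FTr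
  rw [← integral_const_mul]
  refine integral_congr_ae (ae_of_all _ fun x => ?_)
  push_cast
  ring

lemma Bform_smul (p N : ℕ) [Fact p.Prime] (μ : Measure (Fin N → ℚ_[p]))
    (χ : ℚ_[p] → ℂ) (w : (Fin N → ℚ_[p]) → ℝ) (γ α₂ : ℝ)
    (f : (Fin N → ℚ_[p]) → ℝ) (t : ℝ) :
    Bform p N μ χ w γ α₂ (fun x => t * f x) (fun x => t * f x)
      = t^2 * Bform p N μ χ w γ α₂ f f := by
  unfold Bform
  have h : ∀ κ, FTr p N μ χ (fun x => t * f x) κ *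
      (starRingEnd ℂ) (FTr p N μ χ (fun x => t * f x) κ) /
      ((γ:ℂ)/2 * Asymb p N μ χ w κ + (α₂:ℂ)/2)
      = ((t^2 : ℝ) : ℂ) * (FTr p N μ χ f κ * (starRingEnd ℂ) (FTr p N μ χ f κ) /
        ((γ:ℂ)/2 * Asymb p N μ χ w κ + (α₂:ℂ)/2)) := by
    intro κ
    rw [FTr_smul, map_mul, Complex.conj_ofReal]
    push_cast
    ring
  simp_rw [h]
  rw [integral_const_mul, Complex.re_ofReal_mul]

end TestAux

lemma core_integrable {E : Type*} [MeasurableSpace E] (P : Measure E) [IsProbabilityMeasure P]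
    (X : E → ℝ) (hX : Measurable X) (v : ℝ)
    (hchar : ∀ t : ℝ, ∫ W, Complex.exp (Complex.I * ((t * X W : ℝ) : ℂ)) ∂P
        = ((Real.exp (-(t ^ 2 * v) / 2) : ℝ) : ℂ)) :
    Integrable (fun W => Real.exp (X W)) P := by
  have hv : 0 ≤ v := by
    have h1 := hchar 1
    have h2 : ‖∫ W, Complex.exp (Complex.I * ((1 * X W : ℝ) : ℂ)) ∂P‖ ≤ 1 := by
      refine (norm_integral_le_of_norm_le_const (C := 1) (ae_of_all _ fun W => ?_)).trans ?_
      · rw [Complex.norm_exp]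
        simp
      · simp
    rw [h1] at h2
    simp only [Complex.norm_real, Real.norm_eq_abs, abs_of_pos (Real.exp_pos _)] at h2
    rw [Real.exp_le_one_iff] at h2
    nlinarith
  have hb' : (0:ℝ) < (1+v)/2 := by linarith
  set b' : ℝ := (1+v)/2 with hb'def
  -- Step A: Fourier representation of the Gaussian
  have hA : ∀ c : ℝ, (∫ x : ℝ, Complex.exp (Complex.I * (c:ℂ) * (x:ℂ)) *
      Complex.exp (-(1/2 : ℂ) * (x:ℂ) ^ 2))
      = ((2*Real.pi : ℝ):ℂ) ^ (1/2 : ℂ) * Complex.exp (-(c:ℂ)^2 / 2) := by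
    intro c
    have h := fourierIntegral_gaussian (b := (1/2 : ℂ)) (by norm_num) (c : ℂ)
    rw [h]
    congr 1
    · congr 1
      push_cast
      ring
    · congr 1
      ring_nf
  -- measurability of the product integrand
  have hmeasC : ∀ a : ℝ, AEStronglyMeasurable
      (Function.uncurry fun (W : E) (x : ℝ) =>
        Complex.exp (Complex.I * ((X W - a : ℝ):ℂ) * (x:ℂ)) *
        Complex.exp (-(1/2 : ℂ) * (x:ℂ) ^ 2)) (P.prod volume) := by
    intro a
    apply Measurable.aestronglyMeasurable
    fun_prop
  have hnorm1 : ∀ (r x : ℝ), ‖Complex.exp (Complex.I * (r:ℂ) * (x:ℂ))‖ = 1 := by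
    intro r x
    rw [Complex.norm_exp]
    simp
  have hnormG : ∀ x : ℝ, ‖Complex.exp (-(1/2:ℂ) * (x:ℂ)^2)‖ = Real.exp (-(1/2) * x^2) := by
    intro x
    have h : (-(1/2:ℂ) * (x:ℂ)^2) = ((-(1/2) * x^2 : ℝ) : ℂ) := by push_cast; ring
    rw [h, ← Complex.ofReal_exp, Complex.norm_real, Real.norm_of_nonneg (Real.exp_pos _).le]
  have hGint : Integrable (fun x : ℝ => Real.exp (-(1/2) * x^2)) :=
    integrable_exp_neg_mul_sq (by norm_num)
  have hProdInt : ∀ a : ℝ, Integrable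
      (Function.uncurry fun (W : E) (x : ℝ) =>
        Complex.exp (Complex.I * ((X W - a : ℝ):ℂ) * (x:ℂ)) *
        Complex.exp (-(1/2 : ℂ) * (x:ℂ) ^ 2)) (P.prod volume) := by
    intro a
    rw [integrable_prod_iff (hmeasC a)]
    constructor
    · refine ae_of_all _ fun W => ?_
      refine Integrable.mono' hGint ?_ (ae_of_all _ fun x => ?_)
      · apply Measurable.aestronglyMeasurable; fun_prop
      · rw [Function.uncurry, norm_mul, hnorm1, hnormG, one_mul]
    · refine (integrable_const (∫ x : ℝ, Real.exp (-(1/2) * x^2))).congr ?_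
      refine ae_of_all _ fun W => ?_
      refine (integral_congr_ae (ae_of_all _ fun x => ?_)).symm
      rw [Function.uncurry, norm_mul, hnorm1, hnormG, one_mul]
  -- the W-integral for fixed x
  have hWint : ∀ (a x : ℝ),
      (∫ W, Complex.exp (Complex.I * ((X W - a:ℝ):ℂ) * (x:ℂ)) *
        Complex.exp (-(1/2:ℂ) * (x:ℂ)^2) ∂P)
      = Complex.exp (Complex.I * ((-a : ℝ):ℂ) * (x:ℂ)) *
        Complex.exp (-(((1+v)/2 : ℝ):ℂ) * (x:ℂ)^2) := by
    intro a x
    have h1 : ∀ W, Complex.exp (Complex.I * ((X W - a:ℝ):ℂ) * (x:ℂ)) *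
        Complex.exp (-(1/2:ℂ) * (x:ℂ)^2)
        = Complex.exp (Complex.I * ((x * X W :ℝ):ℂ)) *
          (Complex.exp (-Complex.I * (a:ℂ) * (x:ℂ)) * Complex.exp (-(1/2:ℂ) * (x:ℂ)^2)) := by
      intro W
      rw [← Complex.exp_add, ← Complex.exp_add, ← Complex.exp_add]
      congr 1
      push_cast
      ring
    simp_rw [h1]
    rw [integral_mul_const, hchar x]
    rw [Complex.ofReal_exp, ← Complex.exp_add, ← Complex.exp_add, ← Complex.exp_add]
    congr 1
    push_cast
    ring
  -- the main complex identity
  have hXa : ∀ a : ℝ, ((2*Real.pi:ℝ):ℂ)^(1/2:ℂ) *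
      (∫ W, Complex.exp (-(((X W - a :ℝ):ℂ))^2/2) ∂P)
      = ((Real.pi / b' : ℝ):ℂ)^(1/2:ℂ) *
        Complex.exp (-((a:ℝ):ℂ)^2/(4*((b':ℝ):ℂ))) := by
    intro a
    calc ((2*Real.pi:ℝ):ℂ)^(1/2:ℂ) * (∫ W, Complex.exp (-(((X W - a :ℝ):ℂ))^2/2) ∂P)
        = ∫ W, (∫ x : ℝ, Complex.exp (Complex.I * ((X W - a:ℝ):ℂ) * (x:ℂ)) *
            Complex.exp (-(1/2:ℂ) * (x:ℂ)^2)) ∂P := by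
          rw [← integral_const_mul]
          exact integral_congr_ae (ae_of_all _ fun W => (hA (X W - a)).symm)
      _ = ∫ x : ℝ, (∫ W, Complex.exp (Complex.I * ((X W - a:ℝ):ℂ) * (x:ℂ)) *
            Complex.exp (-(1/2:ℂ) * (x:ℂ)^2) ∂P) := integral_integral_swap (hProdInt a)
      _ = ∫ x : ℝ, Complex.exp (Complex.I * ((-a:ℝ):ℂ) * (x:ℂ)) *
            Complex.exp (-(((1+v)/2:ℝ):ℂ) * (x:ℂ)^2) := by
          exact integral_congr_ae (ae_of_all _ fun x => hWint a x)
      _ = ((Real.pi:ℂ) / (((1+v)/2:ℝ):ℂ))^(1/2:ℂ) *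
            Complex.exp (-(((-a:ℝ):ℂ))^2/(4*(((1+v)/2:ℝ):ℂ))) := by
          exact fourierIntegral_gaussian (by simpa using (show (0:ℝ) < 1+v by linarith)) ((-a:ℝ):ℂ)
      _ = ((Real.pi / b' : ℝ):ℂ)^(1/2:ℂ) * Complex.exp (-((a:ℝ):ℂ)^2/(4*((b':ℝ):ℂ))) := by
          rw [hb'def]
          congr 1
          · congr 1; push_cast; ring
          · congr 1; push_cast; ring
  -- extract the real identity
  set K : ℝ := (Real.pi / b') ^ ((1:ℝ)/2) / (2*Real.pi) ^ ((1:ℝ)/2) with hKdef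
  have hgK : ∀ a : ℝ, ∫ W, Real.exp (-(X W - a)^2/2) ∂P = K * Real.exp (-a^2/(4*b')) := by
    intro a
    have h2 := hXa a
    have hof : (∫ W, Complex.exp (-(((X W - a :ℝ):ℂ))^2/2) ∂P)
        = (((∫ W, Real.exp (-(X W - a)^2/2) ∂P : ℝ)) : ℂ) := by
      have he : ∀ W : E, Complex.exp (-(((X W - a :ℝ):ℂ))^2/2)
          = ((Real.exp (-(X W - a)^2/2) : ℝ) : ℂ) := by
        intro W
        rw [Complex.ofReal_exp]
        congr 1
        push_cast
        ring
      simp_rw [he]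
      exact integral_ofReal
    rw [hof] at h2
    have c1 : ((2*Real.pi:ℝ):ℂ)^(1/2:ℂ) = ((((2*Real.pi) ^ ((1:ℝ)/2) : ℝ)) : ℂ) := by
      rw [Complex.ofReal_cpow (by positivity)]
      norm_num
    have c2 : ((Real.pi / b' : ℝ):ℂ)^(1/2:ℂ) = ((((Real.pi / b') ^ ((1:ℝ)/2) : ℝ)) : ℂ) := by
      rw [Complex.ofReal_cpow (by positivity)]
      norm_num
    have c3 : Complex.exp (-((a:ℝ):ℂ)^2/(4*((b':ℝ):ℂ))) = ((Real.exp (-a^2/(4*b')) : ℝ) : ℂ) := by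
      rw [Complex.ofReal_exp]
      congr 1
      push_cast
      ring
    rw [c1, c2, c3, ← Complex.ofReal_mul, ← Complex.ofReal_mul] at h2
    have h3 := Complex.ofReal_inj.mp h2
    have hApos : (0:ℝ) < (2*Real.pi) ^ ((1:ℝ)/2) := by positivity
    rw [hKdef]
    rw [div_mul_eq_mul_div, eq_div_iff hApos.ne']
    linear_combination h3
  have hKpos : 0 ≤ K := by rw [hKdef]; positivity
  -- the Gaussian integral over the shift parameter
  have hpt : ∀ x : ℝ, (∫ a : ℝ, Real.exp (a - (x - a)^2/2))
      = Real.sqrt (2*Real.pi) * Real.exp (x + 1/2) := by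
    intro x
    have h1 : (fun a : ℝ => Real.exp (a - (x-a)^2/2))
        = fun a => Real.exp (x + 1/2) * Real.exp (-(1/2) * (a - (x+1))^2) := by
      funext a
      rw [← Real.exp_add]
      congr 1
      ring
    rw [h1, MeasureTheory.integral_const_mul,
      integral_sub_right_eq_self (fun a => Real.exp (-(1/2) * a^2)) (x+1),
      integral_gaussian]
    rw [show Real.pi / (1/2) = 2 * Real.pi by ring]
    ring
  have hint_a : ∀ x : ℝ, Integrable (fun a : ℝ => Real.exp (a - (x - a)^2/2)) := by
    intro x
    have h1 : (fun a : ℝ => Real.exp (a - (x-a)^2/2))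
        = fun a => Real.exp (x + 1/2) * Real.exp (-(1/2) * (a - (x+1))^2) := by
      funext a
      rw [← Real.exp_add]
      congr 1
      ring
    rw [h1]
    exact ((integrable_exp_neg_mul_sq (by norm_num)).comp_sub_right (x+1)).const_mul _
  have hKint : Integrable (fun a : ℝ => Real.exp a * (K * Real.exp (-a^2/(4*b')))) := by
    have harg : ∀ a : ℝ, a + (-a^2/(4*b')) = b' + (-(1/(4*b')) * (a - 2*b')^2) := by
      intro a
      field_simp
      ring
    have h1 : (fun a : ℝ => Real.exp a * (K * Real.exp (-a^2/(4*b'))))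
        = fun a => (K * Real.exp b') * Real.exp (-(1/(4*b')) * (a - 2*b')^2) := by
      funext a
      rw [mul_left_comm, ← Real.exp_add, harg a, Real.exp_add]
      ring
    rw [h1]
    exact ((integrable_exp_neg_mul_sq (by positivity)).comp_sub_right (2*b')).const_mul _
  -- now the main integrability claim
  have hXme : Measurable fun W => Real.exp (X W) := Real.measurable_exp.comp hX
  refine ⟨hXme.aestronglyMeasurable, ?_⟩
  rw [hasFiniteIntegral_iff_norm]
  have hnrm : ∀ W, ENNReal.ofReal ‖Real.exp (X W)‖ = ENNReal.ofReal (Real.exp (X W)) := by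
    intro W
    rw [Real.norm_of_nonneg (Real.exp_pos _).le]
  simp_rw [hnrm]
  set c₀ : ℝ := Real.sqrt (2*Real.pi) * Real.exp (1/2) with hc₀def
  have hc₀ : 0 < c₀ := by rw [hc₀def]; positivity
  have hx0 : ∀ x : ℝ, ENNReal.ofReal (Real.exp x)
      = ENNReal.ofReal c₀⁻¹ * ∫⁻ a : ℝ, ENNReal.ofReal (Real.exp (a - (x-a)^2/2)) := by
    intro x
    rw [← ofReal_integral_eq_lintegral_ofReal (hint_a x)
      (ae_of_all _ fun a => (Real.exp_pos _).le)]
    rw [hpt x, ← ENNReal.ofReal_mul (by positivity)]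
    congr 1
    rw [hc₀def, Real.exp_add]
    have hs : (0:ℝ) < Real.sqrt (2*Real.pi) := Real.sqrt_pos.mpr (by positivity)
    field_simp
  have hgm : Measurable (fun q : E × ℝ =>
      ENNReal.ofReal (Real.exp (q.2 - (X q.1 - q.2)^2/2))) := by fun_prop
  have hinner3 : ∀ a : ℝ, (∫⁻ W, ENNReal.ofReal (Real.exp (a - (X W - a)^2/2)) ∂P)
      = ENNReal.ofReal (Real.exp a * (K * Real.exp (-a^2/(4*b')))) := by
    intro a
    have h1 : ∀ W, Real.exp (a - (X W - a)^2/2)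
        = Real.exp a * Real.exp (-(X W - a)^2/2) := by
      intro W
      rw [← Real.exp_add]
      congr 1
      ring
    simp_rw [h1]
    have hint2 : Integrable (fun W => Real.exp a * Real.exp (-(X W - a)^2/2)) P := by
      refine Integrable.const_mul ?_ _
      refine Integrable.mono' (integrable_const 1) ?_ (ae_of_all _ fun W => ?_)
      · apply Measurable.aestronglyMeasurable
        fun_prop
      · rw [Real.norm_of_nonneg (Real.exp_pos _).le]
        exact Real.exp_le_one_iff.mpr (by nlinarith [sq_nonneg (X W - a)])
    rw [← ofReal_integral_eq_lintegral_ofReal hint2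
      (ae_of_all _ fun W => by positivity)]
    rw [MeasureTheory.integral_const_mul, hgK a]
  calc (∫⁻ W, ENNReal.ofReal (Real.exp (X W)) ∂P)
      = ∫⁻ W, (ENNReal.ofReal c₀⁻¹ *
          ∫⁻ a : ℝ, ENNReal.ofReal (Real.exp (a - (X W - a)^2/2))) ∂P := by
        exact lintegral_congr fun W => hx0 (X W)
    _ = ENNReal.ofReal c₀⁻¹ *
          ∫⁻ W, (∫⁻ a : ℝ, ENNReal.ofReal (Real.exp (a - (X W - a)^2/2))) ∂P := by
        rw [lintegral_const_mul]
        exact hgm.lintegral_prod_right'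
    _ = ENNReal.ofReal c₀⁻¹ *
          ∫⁻ a : ℝ, (∫⁻ W, ENNReal.ofReal (Real.exp (a - (X W - a)^2/2)) ∂P) := by
        rw [lintegral_lintegral_swap hgm.aemeasurable]
    _ = ENNReal.ofReal c₀⁻¹ *
          ∫⁻ a : ℝ, ENNReal.ofReal (Real.exp a * (K * Real.exp (-a^2/(4*b')))) := by
        congr 1
        exact lintegral_congr fun a => hinner3 a
    _ = ENNReal.ofReal c₀⁻¹ *
          ENNReal.ofReal (∫ a : ℝ, Real.exp a * (K * Real.exp (-a^2/(4*b')))) := by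
        rw [← ofReal_integral_eq_lintegral_ofReal hKint
          (ae_of_all _ fun a => by positivity)]
    _ < ⊤ := by
        exact ENNReal.mul_lt_top ENNReal.ofReal_lt_top ENNReal.ofReal_lt_top

/-- the iterated functional derivatives of the generating functional
`Z_F(J) = ∫ F(W) e^{⟨W,J⟩} dP(W)` exist and are obtained by inserting the factors
`⟨W,θ_i⟩` under the integral sign.  The statement below expresses the iteration step:
for any number `m` of already-inserted factors, the directional derivative (in the
sense `D_θ Φ(J) = lim_{ε→0}(Φ(J+εθ)−Φ(J))/ε`, i.e. the derivative at `ε = 0` of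
`ε ↦ Φ(J+εθ)`) of the `m`-factor functional exists and equals the `(m+1)`-factor
functional; together with the integrability of all integrands this is precisely the
existence of `D_{θ_1}⋯D_{θ_m} Z_F(J)` together with the announced formula. -/
theorem statement15
    (p : ℕ) [Fact p.Prime] (hp3 : 3 ≤ p) (N : ℕ) (hN : 1 ≤ N)
    (μ : Measure (Fin N → ℚ_[p])) [μ.IsAddHaarMeasure]
    (hμ1 : μ (Metric.closedBall 0 1) = 1)
    (δ : ℝ) (hδ : (N : ℝ) < δ)
    (w : (Fin N → ℚ_[p]) → ℝ)
    (hw0 : ∀ y, 0 ≤ w y)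
    (hrad : ∀ x y : Fin N → ℚ_[p], ‖x‖ = ‖y‖ → w x = w y)
    (hcont : Continuous w)
    (hmono : ∀ x y : Fin N → ℚ_[p], ‖x‖ ≤ ‖y‖ → w x ≤ w y)
    (hzero : ∀ y : Fin N → ℚ_[p], w y = 0 ↔ y = 0)
    (C₀ C₁ : ℝ) (hC₀ : 0 < C₀) (hC₁ : 0 < C₁)
    (hlow : ∀ y : Fin N → ℚ_[p], C₀ * ‖y‖ ^ δ ≤ w y)
    (hupp : ∀ y : Fin N → ℚ_[p], w y ≤ C₁ * ‖y‖ ^ δ)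
    (χ : ℚ_[p] → ℂ)
    (hχ_add : ∀ a b, χ (a + b) = χ a * χ b)
    (hχ_ker : ∀ a : ℚ_[p], χ a = 1 ↔ ‖a‖ ≤ 1)
    (hχ_abs : ∀ a : ℚ_[p], ‖χ a‖ = 1)
    (γ α₂ : ℝ) (hγ : 0 < γ) (hα₂ : 0 < α₂)
    (E : Type*) [MeasurableSpace E]
    (pair : E → ((Fin N → ℚ_[p]) → ℝ) → ℝ)
    (hlin : ∀ W : E, IsLinearMap ℝ (pair W))
    (hmeas : ∀ f : (Fin N → ℚ_[p]) → ℝ, IsTest p N f → (∫ x, f x ∂μ) = 0 →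
      Measurable fun W => pair W f)
    (P : Measure E) [IsProbabilityMeasure P]
    (hchar : ∀ f : (Fin N → ℚ_[p]) → ℝ, IsTest p N f → (∫ x, f x ∂μ) = 0 →
      ∫ W, Complex.exp (Complex.I * ((pair W f : ℝ) : ℂ)) ∂P =
        ((Real.exp (-(Bform p N μ χ w γ α₂ f f) / 2) : ℝ) : ℂ))
    (F : E → ℝ) (hFmeas : Measurable F) (hF01 : ∀ W, 0 ≤ F W ∧ F W ≤ 1) :
    ∀ (m : ℕ) (θs : Fin m → (Fin N → ℚ_[p]) → ℝ),
      (∀ i, IsTest p N (θs i) ∧ (∫ x, θs i x ∂μ) = 0) →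
      ∀ (θ : (Fin N → ℚ_[p]) → ℝ), IsTest p N θ → (∫ x, θ x ∂μ) = 0 →
      ∀ (J : (Fin N → ℚ_[p]) → ℝ), IsTest p N J → (∫ x, J x ∂μ) = 0 →
      -- integrability of all the relevant integrands
      Integrable (fun W => F W * (∏ i, pair W (θs i)) * Real.exp (pair W J)) P ∧
      Integrable
        (fun W => F W * (∏ i, pair W (θs i)) * pair W θ * Real.exp (pair W J)) P ∧
      -- the derivative `D_θ` of the `m`-factor functional exists and is obtained by
      -- inserting `⟨W,θ⟩` under the integral sign
      HasDerivAt
        (fun ε : ℝ =>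
          ∫ W, F W * (∏ i, pair W (θs i)) *
            Real.exp (pair W (fun x => J x + ε * θ x)) ∂P)
        (∫ W, F W * (∏ i, pair W (θs i)) * pair W θ * Real.exp (pair W J) ∂P)
        0 := by
  intro m θs hθs θ hθ1 hθ2 J hJ1 hJ2
  -- the exponential integrability of `exp (pair W f)` for every admissible `f`
  have key : ∀ f : (Fin N → ℚ_[p]) → ℝ, IsTest p N f → (∫ x, f x ∂μ) = 0 →
      Integrable (fun W => Real.exp (pair W f)) P := by
    intro f h1 h2
    refine core_integrable P (fun W => pair W f) (hmeas f h1 h2)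
      (Bform p N μ χ w γ α₂ f f) ?_
    intro t
    have h3 : IsTest p N (fun x => t * f x) := h1.smul t
    have h4 : (∫ x, t * f x ∂μ) = 0 := by
      rw [MeasureTheory.integral_const_mul, h2, mul_zero]
    have h5 := hchar _ h3 h4
    have h6 : ∀ W : E, pair W (fun x => t * f x) = t * pair W f := by
      intro W
      exact (hlin W).map_smul t f
    simp_rw [h6] at h5
    rw [Bform_smul] at h5
    exact h5
  -- |z| ≤ e^z + e^{-z}
  have habs : ∀ z : ℝ, |z| ≤ Real.exp z + Real.exp (-z) := by
    intro z
    rcases abs_cases z with ⟨h, _⟩ | ⟨h, _⟩ <;> rw [h] <;>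
      nlinarith [Real.add_one_le_exp z, Real.add_one_le_exp (-z),
        (Real.exp_pos z).le, (Real.exp_pos (-z)).le]
  -- the master integrability lemma
  have master : ∀ (k : ℕ) (h : Fin k → (Fin N → ℚ_[p]) → ℝ),
      (∀ i, IsTest p N (h i) ∧ (∫ x, h i x ∂μ) = 0) →
      ∀ g : (Fin N → ℚ_[p]) → ℝ, IsTest p N g → (∫ x, g x ∂μ) = 0 →
      Integrable (fun W => (∏ i, |pair W (h i)|) * Real.exp (pair W g)) P := by
    intro k
    induction k with
    | zero =>
      intro h hh g hg1 hg2
      simpa using key g hg1 hg2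
    | succ k ih =>
      intro h hh g hg1 hg2
      set Z : E → ℝ := fun W => pair W (h (Fin.last k)) with hZdef
      have hlast := hh (Fin.last k)
      set gp : (Fin N → ℚ_[p]) → ℝ := fun x => g x + h (Fin.last k) x with hgpdef
      set gm : (Fin N → ℚ_[p]) → ℝ := fun x => g x + (-1) * h (Fin.last k) x with hgmdef
      have hgp1 : IsTest p N gp := hg1.add hlast.1
      have hgm1 : IsTest p N gm := hg1.add (hlast.1.smul (-1))
      have hgp2 : (∫ x, gp x ∂μ) = 0 := by
        rw [hgpdef]
        rw [integral_add (hg1.integrable μ) (hlast.1.integrable μ), hg2, hlast.2, add_zero]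
      have hgm2 : (∫ x, gm x ∂μ) = 0 := by
        rw [hgmdef]
        rw [integral_add (hg1.integrable μ) ((hlast.1.smul (-1)).integrable μ), hg2,
          MeasureTheory.integral_const_mul, hlast.2, mul_zero, add_zero]
      have IHp := ih (fun i => h i.castSucc) (fun i => hh i.castSucc) gp hgp1 hgp2
      have IHm := ih (fun i => h i.castSucc) (fun i => hh i.castSucc) gm hgm1 hgm2
      have hpairp : ∀ W : E, pair W gp = pair W g + Z W := fun W =>
        (hlin W).map_add g (h (Fin.last k))
      have hpairm : ∀ W : E, pair W gm = pair W g + (-1) * Z W := by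
        intro W
        have h1 : pair W gm = pair W g + pair W (fun x => (-1) * h (Fin.last k) x) :=
          (hlin W).map_add g (fun x => (-1) * h (Fin.last k) x)
        have h2 : pair W (fun x => (-1) * h (Fin.last k) x) = (-1) * Z W :=
          (hlin W).map_smul (-1) (h (Fin.last k))
        rw [h1, h2]
      have hmeask : Measurable fun W => (∏ i, |pair W (h i)|) * Real.exp (pair W g) := by
        apply Measurable.mul
        · exact Finset.measurable_prod _ fun i _ =>
            continuous_abs.measurable.comp (hmeas _ (hh i).1 (hh i).2)
        · exact Real.measurable_exp.comp (hmeas _ hg1 hg2)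
      refine Integrable.mono' (IHp.add IHm) hmeask.aestronglyMeasurable
        (ae_of_all _ fun W => ?_)
      have hprodnn : (0:ℝ) ≤ ∏ i : Fin k, |pair W (h i.castSucc)| :=
        Finset.prod_nonneg fun i _ => abs_nonneg _
      rw [Real.norm_of_nonneg (mul_nonneg (Finset.prod_nonneg fun i _ => abs_nonneg _)
        (Real.exp_pos _).le)]
      rw [Fin.prod_univ_castSucc]
      calc (∏ i : Fin k, |pair W (h i.castSucc)|) * |Z W| * Real.exp (pair W g)
          ≤ (∏ i : Fin k, |pair W (h i.castSucc)|) *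
            ((Real.exp (Z W) + Real.exp (-(Z W))) * Real.exp (pair W g)) := by
            rw [mul_assoc]
            exact mul_le_mul_of_nonneg_left (mul_le_mul_of_nonneg_right (habs (Z W))
              (Real.exp_pos _).le) hprodnn
        _ = (∏ i : Fin k, |pair W (h i.castSucc)|) * Real.exp (pair W gp)
            + (∏ i : Fin k, |pair W (h i.castSucc)|) * Real.exp (pair W gm) := by
            rw [hpairp W, hpairm W, Real.exp_add, Real.exp_add]
            have : Real.exp ((-1) * Z W) = Real.exp (-(Z W)) := by norm_num
            rw [this]
            ring
        _ = _ := rfl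
  -- abbreviations
  have hXim : ∀ i, Measurable fun W => pair W (θs i) :=
    fun i => hmeas _ (hθs i).1 (hθs i).2
  have hZm : Measurable fun W => pair W θ := hmeas _ hθ1 hθ2
  have hYm : Measurable fun W => pair W J := hmeas _ hJ1 hJ2
  have hprodm : Measurable fun W => ∏ i, pair W (θs i) :=
    Finset.measurable_prod _ fun i _ => hXim i
  have habsprodnn : ∀ W : E, (0:ℝ) ≤ ∏ i, |pair W (θs i)| :=
    fun W => Finset.prod_nonneg fun i _ => abs_nonneg _
  have hF1 : ∀ W, |F W| ≤ 1 := fun W => abs_le.mpr ⟨by linarith [(hF01 W).1], (hF01 W).2⟩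
  -- linearity rewrites
  have hrw : ∀ (c : ℝ) (W : E), pair W (fun x => J x + c * θ x)
      = pair W J + c * pair W θ := by
    intro c W
    have h1 : pair W (fun x => J x + c * θ x)
        = pair W J + pair W (fun x => c * θ x) := (hlin W).map_add J (fun x => c * θ x)
    have h2 : pair W (fun x => c * θ x) = c * pair W θ := (hlin W).map_smul c θ
    rw [h1, h2]
  have hTc : ∀ c : ℝ, IsTest p N (fun x => J x + c * θ x) ∧
      (∫ x, J x + c * θ x ∂μ) = 0 := by
    intro c
    refine ⟨hJ1.add (hθ1.smul c), ?_⟩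
    rw [integral_add (hJ1.integrable μ) ((hθ1.smul c).integrable μ), hJ2,
      MeasureTheory.integral_const_mul, hθ2, mul_zero, add_zero]
  -- Goal 1
  have goal1 : Integrable (fun W => F W * (∏ i, pair W (θs i)) * Real.exp (pair W J)) P := by
    refine Integrable.mono' (master m θs hθs J hJ1 hJ2)
      ((hFmeas.mul hprodm).mul (Real.measurable_exp.comp hYm)).aestronglyMeasurable
      (ae_of_all _ fun W => ?_)
    rw [Real.norm_eq_abs, abs_mul, abs_mul, Finset.abs_prod, abs_of_pos (Real.exp_pos _)]
    calc |F W| * (∏ i, |pair W (θs i)|) * Real.exp (pair W J)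
        ≤ 1 * (∏ i, |pair W (θs i)|) * Real.exp (pair W J) := by
          have := hF1 W
          gcongr
      _ = _ := by ring
  -- Goal 2
  have goal2 : Integrable
      (fun W => F W * (∏ i, pair W (θs i)) * pair W θ * Real.exp (pair W J)) P := by
    have hbint : Integrable (fun W =>
        (∏ i, |pair W (θs i)|) * Real.exp (pair W (fun x => J x + 1 * θ x))
        + (∏ i, |pair W (θs i)|) * Real.exp (pair W (fun x => J x + (-1) * θ x))) P :=
      (master m θs hθs _ (hTc 1).1 (hTc 1).2).add (master m θs hθs _ (hTc (-1)).1 (hTc (-1)).2)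
    refine Integrable.mono' hbint
      (((hFmeas.mul hprodm).mul hZm).mul (Real.measurable_exp.comp hYm)).aestronglyMeasurable
      (ae_of_all _ fun W => ?_)
    rw [Real.norm_eq_abs, abs_mul, abs_mul, abs_mul, Finset.abs_prod,
      abs_of_pos (Real.exp_pos _), hrw 1 W, hrw (-1) W]
    calc |F W| * (∏ i, |pair W (θs i)|) * |pair W θ| * Real.exp (pair W J)
        ≤ 1 * (∏ i, |pair W (θs i)|) * |pair W θ| * Real.exp (pair W J) := by
          have := hF1 W
          gcongr
      _ = (∏ i, |pair W (θs i)|) * (|pair W θ| * Real.exp (pair W J)) := by ring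
      _ ≤ (∏ i, |pair W (θs i)|) *
          ((Real.exp (pair W θ) + Real.exp (-(pair W θ))) * Real.exp (pair W J)) := by
          exact mul_le_mul_of_nonneg_left (mul_le_mul_of_nonneg_right (habs _)
            (Real.exp_pos _).le) (habsprodnn W)
      _ = _ := by
          rw [Real.exp_add, Real.exp_add]
          have : Real.exp ((-1) * pair W θ) = Real.exp (-(pair W θ)) := by norm_num
          rw [this]
          ring
  refine ⟨goal1, goal2, ?_⟩
  -- the scalar inequality used for the uniform local bound
  have hsc : ∀ (Y Z ε : ℝ), |ε| ≤ 1 → |Z| * Real.exp (Y + ε*Z)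
      ≤ (Real.exp (Y + 2*Z) + Real.exp Y) + (Real.exp Y + Real.exp (Y + (-2)*Z)) := by
    intro Y Z ε hε
    have h2 : Real.exp (Y + ε*Z) ≤ Real.exp (Y + |Z|) := by
      apply Real.exp_le_exp.mpr
      have h3 : ε * Z ≤ |Z| := by
        calc ε * Z ≤ |ε * Z| := le_abs_self _
          _ = |ε| * |Z| := abs_mul ε Z
          _ ≤ 1 * |Z| := mul_le_mul_of_nonneg_right hε (abs_nonneg Z)
          _ = |Z| := one_mul _
      linarith
    have h3 : |Z| * Real.exp (Y + ε*Z)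
        ≤ (Real.exp Z + Real.exp (-Z)) * Real.exp (Y + |Z|) :=
      mul_le_mul (habs Z) h2 (Real.exp_pos _).le (by positivity)
    refine h3.trans ?_
    have hid : (Real.exp Z + Real.exp (-Z)) * Real.exp (Y + |Z|)
        = Real.exp (Z + (Y + |Z|)) + Real.exp (-Z + (Y + |Z|)) := by
      rw [add_mul, ← Real.exp_add, ← Real.exp_add]
    rw [hid]
    rcases abs_cases Z with ⟨h, _⟩ | ⟨h, _⟩
    · rw [h]
      have e1 : Z + (Y + Z) = Y + 2*Z := by ring
      have e2 : -Z + (Y + Z) = Y := by ring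
      rw [e1, e2]
      have := (Real.exp_pos Y).le
      have := (Real.exp_pos (Y + (-2)*Z)).le
      linarith
    · rw [h]
      have e1 : Z + (Y + -Z) = Y := by ring
      have e2 : -Z + (Y + -Z) = Y + (-2)*Z := by ring
      rw [e1, e2]
      have := (Real.exp_pos Y).le
      have := (Real.exp_pos (Y + 2*Z)).le
      linarith
  -- the dominated-derivative theorem
  set boundD : E → ℝ := fun W =>
    ((∏ i, |pair W (θs i)|) * Real.exp (pair W (fun x => J x + 2 * θ x))
      + (∏ i, |pair W (θs i)|) * Real.exp (pair W J))
    + ((∏ i, |pair W (θs i)|) * Real.exp (pair W J)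
      + (∏ i, |pair W (θs i)|) * Real.exp (pair W (fun x => J x + (-2) * θ x))) with hboundDdef
  have hboundint : Integrable boundD P :=
    ((master m θs hθs _ (hTc 2).1 (hTc 2).2).add (master m θs hθs J hJ1 hJ2)).add
      ((master m θs hθs J hJ1 hJ2).add (master m θs hθs _ (hTc (-2)).1 (hTc (-2)).2))
  have hres := hasDerivAt_integral_of_dominated_loc_of_deriv_le (μ := P) (x₀ := (0:ℝ))
    (F := fun (ε : ℝ) (W : E) => F W * (∏ i, pair W (θs i)) *
      Real.exp (pair W J + ε * pair W θ))
    (F' := fun (ε : ℝ) (W : E) => F W * (∏ i, pair W (θs i)) * pair W θ *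
      Real.exp (pair W J + ε * pair W θ))
    (bound := boundD) (Metric.ball_mem_nhds (0:ℝ) one_pos)
    (Eventually.of_forall fun ε =>
      ((hFmeas.mul hprodm).mul (Real.measurable_exp.comp
        (hYm.add (hZm.const_mul ε)))).aestronglyMeasurable)
    (by simpa using goal1)
    ((((hFmeas.mul hprodm).mul hZm).mul (Real.measurable_exp.comp
        (hYm.add (hZm.const_mul 0)))).aestronglyMeasurable)
    (ae_of_all _ fun W ε hε => ?_)
    hboundint
    (ae_of_all _ fun W ε hε => ?_)
  · -- conclusion
    simp_rw [hrw]
    have := hres.2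
    simpa using this
  · -- the bound
    have hε1 : |ε| ≤ 1 := by
      have : dist ε 0 < 1 := Metric.mem_ball.mp hε
      rw [Real.dist_eq, sub_zero] at this
      exact this.le
    rw [Real.norm_eq_abs, abs_mul, abs_mul, abs_mul, Finset.abs_prod,
      abs_of_pos (Real.exp_pos _)]
    calc |F W| * (∏ i, |pair W (θs i)|) * |pair W θ| * Real.exp (pair W J + ε * pair W θ)
        ≤ 1 * (∏ i, |pair W (θs i)|) * |pair W θ| * Real.exp (pair W J + ε * pair W θ) := by
          have := hF1 W
          gcongr
      _ = (∏ i, |pair W (θs i)|) *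
          (|pair W θ| * Real.exp (pair W J + ε * pair W θ)) := by ring
      _ ≤ (∏ i, |pair W (θs i)|) *
          ((Real.exp (pair W J + 2*pair W θ) + Real.exp (pair W J))
            + (Real.exp (pair W J) + Real.exp (pair W J + (-2)*pair W θ))) :=
          mul_le_mul_of_nonneg_left (hsc (pair W J) (pair W θ) ε hε1) (habsprodnn W)
      _ = boundD W := by
          rw [hboundDdef]
          simp only []
          rw [hrw 2 W, hrw (-2) W]
          ring
  · -- differentiability in ε
    have h1 : HasDerivAt (fun x : ℝ => pair W J + x * pair W θ) (pair W θ) ε := by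
      simpa using ((hasDerivAt_id ε).mul_const (pair W θ)).const_add (pair W J)
    have h2 := (h1.exp).const_mul (F W * (∏ i, pair W (θs i)))
    convert h2 using 1
    · rfl
    · ring
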